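/- arXiv:1807.08081 — 3 statements merged into one kernel-verified Lean document; each statement's English description precedes it below -/
import Mathlib

section
/- Let 0 < M < c and λ, β, μ > 0. Let R₁ > 0 and R₂ < 0 be the roots of cξ² + (βc − λ − μ)ξ − βμ = 0 and S₂ < 0 the negative root of (c−M)ξ² + (β(c−M) − λ − μ)ξ − βμ = 0. Then (R₂² − S₂R₂)/(R₁² − S₂R₁) > 0, so that the dividend barrier b* = (1/(R₁ − R₂))·log((R₂² − S₂R₂)/(R₁² − S₂R₁)) is a well-defined real number. -/
/-- With `R₁ > 0`, `R₂ < 0` the roots of `cξ² + (βc − λ − μ)ξ − βμ = 0` and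
`S₂ < 0` the negative root of `(c−M)ξ² + (β(c−M) − λ − μ)ξ − βμ = 0`,
the quantity `(R₂² − S₂R₂)/(R₁² − S₂R₁)` is strictly positive, so the barrier
`b* = (1/(R₁ − R₂))·log((R₂² − S₂R₂)/(R₁² − S₂R₁))` is well defined. -/
theorem barrier_well_defined
    (c M lam beta mu R₁ R₂ S₂ : ℝ)
    (hM : 0 < M) (hMc : M < c) (hlam : 0 < lam) (hbeta : 0 < beta) (hmu : 0 < mu)
    (hR₁pos : 0 < R₁) (hR₂neg : R₂ < 0)
    (hR₁ : c * R₁ ^ 2 + (beta * c - lam - mu) * R₁ - beta * mu = 0)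
    (hR₂ : c * R₂ ^ 2 + (beta * c - lam - mu) * R₂ - beta * mu = 0)
    (hS₂neg : S₂ < 0)
    (hS₂ : (c - M) * S₂ ^ 2 + (beta * (c - M) - lam - mu) * S₂ - beta * mu = 0) :
    (R₂ ^ 2 - S₂ * R₂) / (R₁ ^ 2 - S₂ * R₁) > 0 := by
  have hc : 0 < c := hM.trans hMc
  have hcM : 0 < c - M := sub_pos.mpr hMc
  -- S₂ + β > 0
  have hSb : 0 < S₂ + beta := by
    by_contra h
    push_neg at h
    nlinarith [mul_nonneg (le_of_lt hcM) (mul_nonneg (neg_nonneg.mpr hS₂neg.le) (neg_nonneg.mpr h))]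
  -- f_c(S₂) < 0
  have hfS : c * S₂ ^ 2 + (beta * c - lam - mu) * S₂ - beta * mu < 0 := by
    have : c * S₂ ^ 2 + (beta * c - lam - mu) * S₂ - beta * mu
        = ((c - M) * S₂ ^ 2 + (beta * (c - M) - lam - mu) * S₂ - beta * mu)
          + M * S₂ * (S₂ + beta) := by ring
    rw [this, hS₂]
    have := mul_pos (mul_pos hM (neg_pos.mpr hS₂neg)) hSb
    nlinarith
  -- Vieta: c*(S₂ - R₁)*(S₂ - R₂) = f_c(S₂), using sum/product from hR₁, hR₂
  have hne : R₁ - R₂ ≠ 0 := by nlinarith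
  have hsum : c * (R₁ + R₂) = -(beta * c - lam - mu) := by
    have h := sub_eq_zero.mpr (hR₁.trans hR₂.symm)
    have h2 : (R₁ - R₂) * (c * (R₁ + R₂) + (beta * c - lam - mu)) = 0 := by ring_nf; nlinarith [h]
    rcases mul_eq_zero.mp h2 with h3 | h3
    · exact absurd h3 hne
    · linarith
  have hprod : c * (R₁ * R₂) = -(beta * mu) := by nlinarith [hR₁, hsum]
  have hfac : c * ((S₂ - R₁) * (S₂ - R₂)) < 0 := by nlinarith [hfS, hsum, hprod]
  have hS₂R₁ : S₂ - R₁ < 0 := by linarith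
  have hRS : R₂ < S₂ := by
    by_contra h
    push_neg at h
    nlinarith [mul_nonneg (le_of_lt hc) (mul_nonneg (by linarith : (0:ℝ) ≤ R₁ - S₂) (by linarith : (0:ℝ) ≤ R₂ - S₂))]
  have hnum : 0 < R₂ ^ 2 - S₂ * R₂ := by nlinarith
  have hden : 0 < R₁ ^ 2 - S₂ * R₁ := by nlinarith
  exact div_pos hnum hden
end

section
/- Let c, λ, β, μ > 0, let R₁ > 0 and R₂ < 0 be the two real roots of cξ² + (βc − λ − μ)ξ − βμ = 0, and let γ ∈ ℝ. Define F₁(x) = γ[(R₁ + β)e^{R₁x} − (R₂ + β)e^{R₂x}]. Then for every x ≥ 0, −(μ + λ)F₁(x) + cF₁'(x) + λ∫₀ˣ F₁(x − y)·βe^{−βy} dy = 0. -/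
open MeasureTheory intervalIntegral Real

/-!
Convolving `e^{Rx}` with the claim density `βe^{−βy}` gives `β(e^{Rx} − e^{−βx})/(R + β)`, so
the weights `R₁ + β` and `−(R₂ + β)` in `F₁` make the two `e^{−βx}` contributions cancel.
What remains of the left-hand side is `γ[q(R₁)e^{R₁x} − q(R₂)e^{R₂x}]` with
`q(ξ) = cξ² + (βc − λ − μ)ξ − βμ`, which vanishes because `R₁` and `R₂` are roots of `q`.
-/

lemma hasDerivAt_exp_const_mul (R t : ℝ) :
    HasDerivAt (fun s => exp (R * s)) (R * exp (R * t)) t := by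
  simpa [mul_comm] using ((hasDerivAt_id t).const_mul R).exp

/-- The convolution identity, multiplied through by `R + β` so that it also holds when
`R + β = 0`. -/
lemma integral_exp_conv_exp (R β x : ℝ) :
    ∫ y in (0:ℝ)..x, (R + β) * exp (R * (x - y)) * (β * exp (-β * y))
      = β * (exp (R * x) - exp (-β * x)) := by
  have hderiv : ∀ y ∈ Set.uIcc (0:ℝ) x,
      HasDerivAt (fun y => -β * exp (R * x - (R + β) * y))
        ((R + β) * exp (R * (x - y)) * (β * exp (-β * y))) y := by
    intro y _
    have h := ((((hasDerivAt_id y).const_mul (R + β)).const_sub (R * x)).exp).const_mul (-β)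
    refine h.congr_deriv ?_
    rw [id, show R * x - (R + β) * y = R * (x - y) + -β * y by ring, exp_add]
    ring
  rw [integral_eq_sub_of_hasDerivAt hderiv (Continuous.intervalIntegrable (by fun_prop) _ _)]
  ring_nf

theorem F1_solves_no_dividend_HJB_general
    (c lam beta mu gamma R₁ R₂ : ℝ)
    (hR₁ : c * R₁ ^ 2 + (beta * c - lam - mu) * R₁ - beta * mu = 0)
    (hR₂ : c * R₂ ^ 2 + (beta * c - lam - mu) * R₂ - beta * mu = 0) :
    ∀ x : ℝ, 0 ≤ x →
      -(mu + lam) * (gamma * ((R₁ + beta) * Real.exp (R₁ * x)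
          - (R₂ + beta) * Real.exp (R₂ * x)))
      + c * deriv (fun x : ℝ => gamma * ((R₁ + beta) * Real.exp (R₁ * x)
          - (R₂ + beta) * Real.exp (R₂ * x))) x
      + lam * ∫ y in (0:ℝ)..x,
          (gamma * ((R₁ + beta) * Real.exp (R₁ * (x - y))
            - (R₂ + beta) * Real.exp (R₂ * (x - y)))) * (beta * Real.exp (-beta * y))
      = 0 := by
  intro x _
  have hderiv : deriv (fun x : ℝ => gamma * ((R₁ + beta) * exp (R₁ * x)
      - (R₂ + beta) * exp (R₂ * x))) x
      = gamma * ((R₁ + beta) * (R₁ * exp (R₁ * x)) - (R₂ + beta) * (R₂ * exp (R₂ * x))) :=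
    ((((hasDerivAt_exp_const_mul R₁ x).const_mul _).sub
      ((hasDerivAt_exp_const_mul R₂ x).const_mul _)).const_mul gamma).deriv
  have hconv : ∫ y in (0:ℝ)..x,
        (gamma * ((R₁ + beta) * exp (R₁ * (x - y))
          - (R₂ + beta) * exp (R₂ * (x - y)))) * (beta * exp (-beta * y))
      = gamma * (beta * (exp (R₁ * x) - exp (-beta * x))
          - beta * (exp (R₂ * x) - exp (-beta * x))) := by
    rw [← integral_exp_conv_exp, ← integral_exp_conv_exp, ← intervalIntegral.integral_sub, ← intervalIntegral.integral_const_mul]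
    · congr 1 with y
      ring
    all_goals exact Continuous.intervalIntegrable (by fun_prop) _ _
  rw [hderiv, hconv]
  linear_combination (gamma * exp (R₁ * x)) * hR₁ - (gamma * exp (R₂ * x)) * hR₂

/-- With `R₁ > 0`, `R₂ < 0` the two real roots of `cξ² + (βc − λ − μ)ξ − βμ = 0`,
the function `F₁(x) = γ[(R₁+β)e^{R₁x} − (R₂+β)e^{R₂x}]` satisfies the HJB
equation of the no-dividend region:
`−(μ+λ)F₁(x) + cF₁'(x) + λ∫₀ˣ F₁(x−y)·βe^{−βy} dy = 0` for every `x ≥ 0`. -/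
theorem F1_solves_no_dividend_HJB
    (c lam beta mu gamma R₁ R₂ : ℝ)
    (hc : 0 < c) (hlam : 0 < lam) (hbeta : 0 < beta) (hmu : 0 < mu)
    (hR₁pos : 0 < R₁) (hR₂neg : R₂ < 0)
    (hR₁ : c * R₁ ^ 2 + (beta * c - lam - mu) * R₁ - beta * mu = 0)
    (hR₂ : c * R₂ ^ 2 + (beta * c - lam - mu) * R₂ - beta * mu = 0) :
    ∀ x : ℝ, 0 ≤ x →
      -(mu + lam) * (gamma * ((R₁ + beta) * Real.exp (R₁ * x)
          - (R₂ + beta) * Real.exp (R₂ * x)))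
      + c * deriv (fun x : ℝ => gamma * ((R₁ + beta) * Real.exp (R₁ * x)
          - (R₂ + beta) * Real.exp (R₂ * x))) x
      + lam * ∫ y in (0:ℝ)..x,
          (gamma * ((R₁ + beta) * Real.exp (R₁ * (x - y))
            - (R₂ + beta) * Real.exp (R₂ * (x - y)))) * (beta * Real.exp (-beta * y))
      = 0 :=
  F1_solves_no_dividend_HJB_general c lam beta mu gamma R₁ R₂ hR₁ hR₂
end

section
/- Let a > 0, b > 0 and δ̃, r ∈ ℝ, and define f(r, s) = −bs − ((r − b)/a)(1 − e^{−as}) − (δ̃²/(2a²))(1 − e^{−as})². Then ∫₀^∞ e^{f(r,s)} ds ≤ e^{−min{(r−b)/a, 0}}/b. -/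
open MeasureTheory Real

lemma aux_integral_exp_neg_mul (b : ℝ) (hb : 0 < b) :
    (∫ s in Set.Ioi (0:ℝ), Real.exp (-b * s)) = 1 / b := by
  have := MeasureTheory.integral_comp_mul_left_Ioi (fun x => Real.exp (-x)) 0 hb
  simp only [mul_zero, integral_exp_neg_Ioi_zero, smul_eq_mul, mul_one] at this
  simp only [neg_mul] at this ⊢
  rw [this, one_div]

/-- Integral bound for the Laplace transform of the integrated
Ornstein–Uhlenbeck process: with `b > 0` and
`f(r,s) = −bs − ((r−b)/a)(1−e^{−as}) − (δ̃²/(2a²))(1−e^{−as})²`,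
one has `∫₀^∞ e^{f(r,s)} ds ≤ e^{−min{(r−b)/a, 0}}/b`. -/
theorem laplace_transform_integral_bound
    (a b dtil r : ℝ) (ha : 0 < a) (hb : 0 < b) :
    (∫ s in Set.Ioi (0:ℝ),
        Real.exp (-b * s - (r - b) / a * (1 - Real.exp (-a * s))
          - dtil ^ 2 / (2 * a ^ 2) * (1 - Real.exp (-a * s)) ^ 2))
      ≤ Real.exp (-(min ((r - b) / a) 0)) / b := by
  set c := (r - b) / a with hc
  have key : ∀ s ∈ Set.Ioi (0:ℝ),
      Real.exp (-b * s - c * (1 - Real.exp (-a * s))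
          - dtil ^ 2 / (2 * a ^ 2) * (1 - Real.exp (-a * s)) ^ 2)
        ≤ Real.exp (-(min c 0)) * Real.exp (-b * s) := by
    intro s hs
    rw [← Real.exp_add]
    apply Real.exp_le_exp.mpr
    have h1 : 0 ≤ 1 - Real.exp (-a * s) := by
      have : Real.exp (-a * s) ≤ 1 := by
        apply Real.exp_le_one_iff.mpr
        have : (0:ℝ) < a * s := mul_pos ha hs
        linarith
      linarith
    have h2 : 1 - Real.exp (-a * s) ≤ 1 := by
      have := Real.exp_pos (-a * s); linarith
    have h3 : min c 0 ≤ c * (1 - Real.exp (-a * s)) := by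
      rcases le_or_gt c 0 with h | h
      · calc min c 0 ≤ c := min_le_left _ _
          _ ≤ c * (1 - Real.exp (-a * s)) := by nlinarith
      · calc min c 0 ≤ 0 := min_le_right _ _
          _ ≤ _ := mul_nonneg h.le h1
    have h4 : 0 ≤ dtil ^ 2 / (2 * a ^ 2) * (1 - Real.exp (-a * s)) ^ 2 := by positivity
    linarith
  have hint : IntegrableOn (fun s => Real.exp (-(min c 0)) * Real.exp (-b * s))
      (Set.Ioi (0:ℝ)) := by
    apply Integrable.const_mul
    exact exp_neg_integrableOn_Ioi 0 hb
  have hle : (∫ s in Set.Ioi (0:ℝ),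
        Real.exp (-b * s - c * (1 - Real.exp (-a * s))
          - dtil ^ 2 / (2 * a ^ 2) * (1 - Real.exp (-a * s)) ^ 2))
      ≤ ∫ s in Set.Ioi (0:ℝ), Real.exp (-(min c 0)) * Real.exp (-b * s) := by
    apply integral_mono_of_nonneg
    · filter_upwards with s using (Real.exp_pos _).le
    · exact hint
    · filter_upwards [ae_restrict_mem measurableSet_Ioi] with s hs using key s hs
  calc _ ≤ ∫ s in Set.Ioi (0:ℝ), Real.exp (-(min c 0)) * Real.exp (-b * s) := hle
    _ = Real.exp (-(min c 0)) * (1 / b) := by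
        rw [integral_const_mul, aux_integral_exp_neg_mul b hb]
    _ = Real.exp (-(min c 0)) / b := by ring
end
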